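/- Let G be a partially directed graph on a finite vertex set V that is strictly acyclic and satisfies: whenever I→J is a directed edge and J—K is an undirected edge, the vertices I and K are adjacent (an SA-MPDAG-like graph). Let X and Y be disjoint vertex subsets such that G has no proper semi-directed path from X to Y that starts with an undirected edge. Let p be a strictly positive pmf on ∏_{i∈V}𝒳_i (each 𝒳_i finite nonempty) that factorizes according to every DAG in [G], and assume [G] ≠ ∅. Then for every DAG D ∈ [G] and every choice of intervened values x for X and values y for Y, the Y-marginal of the truncated factorization, Σ_{v_{V∖(X∪Y)}} ∏_{i∈V∖X} p(v_i | v_{Pa_D(i)}) (with X-coordinates fixed at x and Y-coordinates at y), is the same for all D ∈ [G], and equals Σ_b ∏_{j=1}^{k} p(b_j | pa_G(B_j)), where B = An_{G_{V∖X}}(Y)∖Y, {B_1,…,B_k} = CD_G(An_{G_{V∖X}}(Y)), the sum is over configurations b of B, and all parent values lying in X are set to agree with x. -/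

import Mathlib

open scoped Classical

/-- A partially directed graph on vertex type `V`: directed edges `dir i j` (i→j) and
undirected edges `undir i j` (i—j), with at most one edge between any two vertices. -/
structure PDG (V : Type) where
  dir : V → V → Prop
  undir : V → V → Prop
  undir_symm : ∀ i j, undir i j → undir j i
  undir_irrefl : ∀ i, ¬ undir i i
  dir_irrefl : ∀ i, ¬ dir i i
  not_dir_dir : ∀ i j, dir i j → ¬ dir j i
  not_dir_undir : ∀ i j, dir i j → ¬ undir i j

namespace PDG

variable {V : Type}

/-- Adjacency: joined by some edge. -/
def Adj (G : PDG V) (i j : V) : Prop := G.dir i j ∨ G.dir j i ∨ G.undir i j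

/-- A semi-directed step from `i` to `j`: an undirected edge or a directed edge `i→j`. -/
def SStep (G : PDG V) (i j : V) : Prop := G.dir i j ∨ G.undir i j

/-- Existence of a semi-directed cycle: `f 0, …, f m` with `f 0 = f m`, `m ≥ 2`,
each consecutive pair a semi-directed step, at least one step directed. -/
def HasSemiDirectedCycle (G : PDG V) : Prop :=
  ∃ (m : ℕ) (f : ℕ → V), 2 ≤ m ∧ f 0 = f m ∧
    (∀ i < m, G.SStep (f i) (f (i + 1))) ∧ (∃ i < m, G.dir (f i) (f (i + 1)))

/-- Strictly acyclic: no semi-directed cycle. -/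
def StrictlyAcyclic (G : PDG V) : Prop := ¬ G.HasSemiDirectedCycle

/-- Joined by a path of undirected edges (possibly trivial). -/
def sameChain (G : PDG V) (i j : V) : Prop := Relation.ReflTransGen G.undir i j

/-- The chain component of a vertex. -/
def chainComp (G : PDG V) (i : V) : Set V := {j | G.sameChain i j}

/-- Parents of a vertex set. -/
def Pa (G : PDG V) (D : Set V) : Set V := {i | ∃ d ∈ D, G.dir i d}

/-- Ancestors of a vertex set (directed path, possibly of length 0). -/
def An (G : PDG V) (D : Set V) : Set V := {i | ∃ d ∈ D, Relation.ReflTransGen G.dir i d}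

/-- A DAG: only directed edges, and no directed cycles. -/
def IsDAG (G : PDG V) : Prop :=
  (∀ i j, ¬ G.undir i j) ∧ ∀ i, ¬ Relation.TransGen G.dir i i

/-- Unshielded collider `(i, k, j)`: `i→k ← j` with `i`, `j` distinct and non-adjacent. -/
def UC (G : PDG V) (i k j : V) : Prop :=
  i ≠ j ∧ G.dir i k ∧ G.dir j k ∧ ¬ G.Adj i j

/-- `D ∈ [G]`: `D` is a DAG with the same skeleton as `G`, containing every directed edge
of `G`, all of whose unshielded colliders are unshielded colliders of `G`. -/
def InClass (D G : PDG V) : Prop :=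
  D.IsDAG ∧ (∀ i j, D.Adj i j ↔ G.Adj i j) ∧ (∀ i j, G.dir i j → D.dir i j) ∧
    (∀ i k j, D.UC i k j → G.UC i k j)

/-- `C` is a nonempty set, connected by undirected edges within `C`, receiving a directed
edge from `I` and one from `J`. -/
def ComplexCand (G : PDG V) (I : V) (C : Set V) (J : V) : Prop :=
  C.Nonempty ∧
  (∀ a ∈ C, ∀ b ∈ C,
    Relation.ReflTransGen (fun x y => G.undir x y ∧ x ∈ C ∧ y ∈ C) a b) ∧
  (∃ c ∈ C, G.dir I c) ∧ (∃ c ∈ C, G.dir J c)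

/-- Minimal complex `(I, C, J)` of `G`. -/
def MinimalComplex (G : PDG V) (I : V) (C : Set V) (J : V) : Prop :=
  I ≠ J ∧ ¬ G.Adj I J ∧ (∀ a ∈ C, ∀ b ∈ C, G.sameChain a b) ∧
  G.ComplexCand I C J ∧ ∀ C' ⊂ C, ¬ G.ComplexCand I C' J

/-- Remove all directed edges pointing into `S`. -/
def removeInto (G : PDG V) (S : Set V) : PDG V where
  dir i j := G.dir i j ∧ j ∉ S
  undir := G.undir
  undir_symm := G.undir_symm
  undir_irrefl := G.undir_irrefl
  dir_irrefl i h := G.dir_irrefl i h.1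
  not_dir_dir i j h h' := G.not_dir_dir i j h.1 h'.1
  not_dir_undir i j h h' := G.not_dir_undir i j h.1 h'

/-- Induced subgraph on the vertex set `D` (kept on the same vertex type; edges
outside `D` are discarded). -/
def induce (G : PDG V) (D : Set V) : PDG V where
  dir i j := G.dir i j ∧ i ∈ D ∧ j ∈ D
  undir i j := G.undir i j ∧ i ∈ D ∧ j ∈ D
  undir_symm i j h := ⟨G.undir_symm i j h.1, h.2.2, h.2.1⟩
  undir_irrefl i h := G.undir_irrefl i h.1
  dir_irrefl i h := G.dir_irrefl i h.1
  not_dir_dir i j h h' := G.not_dir_dir i j h.1 h'.1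
  not_dir_undir i j h h' := G.not_dir_undir i j h.1 h'.1

/-- `G(↛X)`: `G` with every directed edge into `X ∩ An_G(Y)` removed. -/
def noInto (G : PDG V) (X Y : Set V) : PDG V := G.removeInto (X ∩ G.An Y)

/-- `RM(G; X, Y)`: the induced subgraph of `G(↛X)` on `An_{G(↛X)}(Y)`. -/
def RM (G : PDG V) (X Y : Set V) : PDG V :=
  (G.noInto X Y).induce ((G.noInto X Y).An Y)

/-- There is a proper semi-directed path from `X` to `Y` starting with an undirected
edge: distinct vertices `f 0 ∈ X, …, f m ∈ Y`, only `f 0` in `X`, each consecutive pair a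
semi-directed step, the first edge undirected. -/
def HasProperUndirStartPath (G : PDG V) (X Y : Set V) : Prop :=
  ∃ (m : ℕ) (f : ℕ → V), 1 ≤ m ∧
    (∀ i ≤ m, ∀ j ≤ m, f i = f j → i = j) ∧
    f 0 ∈ X ∧ f m ∈ Y ∧ (∀ i < m, G.SStep (f i) (f (i + 1))) ∧
    (∀ i, 1 ≤ i → i ≤ m → f i ∉ X) ∧ G.undir (f 0) (f 1)

/-- Membership in the chain decomposition `CD_G(D)`: the nonempty intersections of `D`
with chain components of `G`. -/
def CDmem (G : PDG V) (D S : Set V) : Prop :=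
  S.Nonempty ∧ ∃ i, S = D ∩ G.chainComp i

end PDG

noncomputable section Prob

open PDG

variable {V : Type} [Fintype V] [DecidableEq V] {𝒳 : V → Type} [∀ i, Fintype (𝒳 i)]
  [∀ i, Nonempty (𝒳 i)]

/-- Marginal `p_S(v_S)`: sum of `p` over configurations agreeing with `v` on `S`. -/
def marginal (p : (∀ i, 𝒳 i) → ℝ) (S : Set V) (v : ∀ i, 𝒳 i) : ℝ :=
  ∑ w : ∀ i, 𝒳 i, if ∀ i ∈ S, w i = v i then p w else 0

/-- Conditional `p(v_A | v_S) = p_{A∪S}(v_{A∪S}) / p_S(v_S)`. -/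
def condP (p : (∀ i, 𝒳 i) → ℝ) (A S : Set V) (v : ∀ i, 𝒳 i) : ℝ :=
  marginal p (A ∪ S) v / marginal p S v

/-- A strictly positive pmf. -/
def IsPositivePMF (p : (∀ i, 𝒳 i) → ℝ) : Prop :=
  (∀ v, 0 < p v) ∧ ∑ v : ∀ i, 𝒳 i, p v = 1

/-- `p` factorizes according to the DAG `D`. -/
def FactorizesDAG (p : (∀ i, 𝒳 i) → ℝ) (D : PDG V) : Prop :=
  ∀ v, p v = ∏ i : V, condP p {i} (D.Pa {i}) v

/-- The (finitely many) chain components of `G`. -/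
def chainComponents (G : PDG V) : Finset (Set V) :=
  Finset.univ.image (fun i => G.chainComp i)

/-- The outer chain-graph factorization `∏_τ p(v_τ | v_{Pa_G(τ)})` over chain
components `τ` of `G`. -/
def chainProd (G : PDG V) (p : (∀ i, 𝒳 i) → ℝ) (v : ∀ i, 𝒳 i) : ℝ :=
  ∏ τ ∈ chainComponents G, condP p τ (G.Pa τ) v

/-- The product `∏_j p(v_{D_j} | v_{Pa_G(D_j)})` over the chain decomposition
`CD_G(D) = {D_1,…,D_k}` (empty intersections contribute a factor `1`). -/
def cdProd (G : PDG V) (p : (∀ i, 𝒳 i) → ℝ) (D : Set V) (v : ∀ i, 𝒳 i) : ℝ :=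
  ∏ τ ∈ chainComponents G, condP p (D ∩ τ) (G.Pa (D ∩ τ)) v

/-- The identification formula (g-formula) of Perković's theorem:
`Σ_b ∏_j p(b_j | pa_G(B_j))` where `{B_1,…,B_k} = CD_G(An_{G_{V∖X}}(Y))`,
the sum running over configurations of `B = An_{G_{V∖X}}(Y) ∖ Y`, all other
coordinates (in particular the intervened values on `X` and the values on `Y`)
being fixed by `v`. -/
def gFormula (G : PDG V) (p : (∀ i, 𝒳 i) → ℝ) (X Y : Set V) (v : ∀ i, 𝒳 i) : ℝ :=
  ∑ w : ∀ i, 𝒳 i,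
    if ∀ i, i ∉ (G.induce Xᶜ).An Y \ Y → w i = v i then
      cdProd G p ((G.induce Xᶜ).An Y) w
    else 0

/-- The re-weighting formula `Σ_{v'} p(v) / ∏_j p(x_j | pa_G(X_j))`, where
`{X_1,…,X_m} = CD_G(X ∩ An_G(Y))` and the sum runs over configurations of
`V ∖ (X ∪ Y)`, the coordinates on `X ∪ Y` being fixed by `v`. -/
def rwFormula (G : PDG V) (p : (∀ i, 𝒳 i) → ℝ) (X Y : Set V) (v : ∀ i, 𝒳 i) : ℝ :=
  ∑ w : ∀ i, 𝒳 i,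
    if ∀ i ∈ X ∪ Y, w i = v i then p w / cdProd G p (X ∩ G.An Y) w else 0

/-- The `Y`-marginal of the truncated factorization of `p` with respect to the DAG `D`:
`Σ_{v_{V∖(X∪Y)}} ∏_{i ∈ V∖X} p(v_i | v_{Pa_D(i)})`, the coordinates on `X ∪ Y` being
fixed by `v`. -/
def truncMarg (D : PDG V) (p : (∀ i, 𝒳 i) → ℝ) (X Y : Set V) (v : ∀ i, 𝒳 i) : ℝ :=
  ∑ w : ∀ i, 𝒳 i,
    if ∀ i ∈ X ∪ Y, w i = v i then
      ∏ i ∈ Finset.univ.filter (fun i => i ∉ X), condP p {i} (D.Pa {i}) w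
    else 0

end Prob

/-!
Fix `D ∈ [G]` and let `A' = An_{D_{V∖X}}(Y) ⊇ A = An_{G_{V∖X}}(Y)`. In the truncated
factorization of `D`, the vertices outside `A'` can be summed out children-first, each factor
summing to one; this leaves `Σ ∏_{j ∈ A'} p(v_j | v_{Pa_D(j)})`. Since no proper semi-directed
path leaves `X` through an undirected edge, every `D`-parent of a vertex of `A'` that is an
undirected neighbour in `G` lies in `A'`. Hence, grouped by chain components `τ` of `G`, the
factors of `A' ∩ τ` have as outside parents exactly `Pa_G(τ)`, each of which points into all
of `τ` (this is where the Meek-type closure is used), and the local Markov property of `D`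
collapses them into `p(v_{A' ∩ τ} | v_{Pa_G(τ)})`. Finally no vertex of `A' ∖ A` is a parent of
`A`, so these vertices can be summed out one at a time, sinks of the order of chain components
first, and the result is the formula of `G` alone, the same for every `D ∈ [G]`.
-/

open Function

noncomputable section Marginalization

variable {V : Type} [Fintype V] [DecidableEq V] {𝒳 : V → Type} [∀ i, Fintype (𝒳 i)]

def cylinder (S : Set V) (v : ∀ i, 𝒳 i) : Finset (∀ i, 𝒳 i) :=
  Finset.univ.filter fun w => ∀ i ∈ S, w i = v i

/-- `Σ_{w_U} Φ(w_U, v_{V∖U})`: the coordinates in `U` are summed out, the others fixed by `v`. -/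
def sumOut (U : Set V) (Φ : (∀ i, 𝒳 i) → ℝ) (v : ∀ i, 𝒳 i) : ℝ :=
  ∑ w ∈ cylinder Uᶜ v, Φ w

@[simp]
theorem mem_cylinder {S : Set V} {v w : ∀ i, 𝒳 i} : w ∈ cylinder S v ↔ ∀ i ∈ S, w i = v i := by
  simp [cylinder]

theorem marginal_eq_sum_cylinder (p : (∀ i, 𝒳 i) → ℝ) (S : Set V) (v : ∀ i, 𝒳 i) :
    marginal p S v = ∑ w ∈ cylinder S v, p w :=
  (Finset.sum_filter _ _).symm

theorem sum_ite_eq_sumOut {U : Set V} {v : ∀ i, 𝒳 i} (P : (∀ i, 𝒳 i) → Prop) [DecidablePred P]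
    (hP : ∀ w, P w ↔ ∀ i, i ∉ U → w i = v i) (Φ : (∀ i, 𝒳 i) → ℝ) :
    ∑ w, (if P w then Φ w else 0) = sumOut U Φ v := by
  rw [sumOut, cylinder, Finset.sum_filter]
  refine Finset.sum_congr rfl fun w _ => ?_
  by_cases h : P w
  · rw [if_pos h, if_pos (show ∀ i ∈ Uᶜ, w i = v i from (hP w).1 h)]
  · rw [if_neg h, if_neg (show ¬ ∀ i ∈ Uᶜ, w i = v i from mt (hP w).2 h)]

theorem sumOut_congr {U : Set V} {Φ Ψ : (∀ i, 𝒳 i) → ℝ} {v : ∀ i, 𝒳 i}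
    (h : ∀ w, (∀ i, i ∉ U → w i = v i) → Φ w = Ψ w) : sumOut U Φ v = sumOut U Ψ v :=
  Finset.sum_congr rfl fun w hw => h w (mem_cylinder.1 hw)

theorem sumOut_mul_left {U : Set V} {g h : (∀ i, 𝒳 i) → ℝ} {v : ∀ i, 𝒳 i}
    (hg : ∀ w, (∀ i, i ∉ U → w i = v i) → g w = g v) :
    sumOut U (fun w => g w * h w) v = g v * sumOut U h v := by
  rw [sumOut, sumOut, Finset.mul_sum]
  exact Finset.sum_congr rfl fun w hw => by rw [hg w (mem_cylinder.1 hw)]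

theorem sum_cylinder_fiberwise {S : Set V} {u : V} (hu : u ∉ S) (v : ∀ i, 𝒳 i)
    (F : (∀ i, 𝒳 i) → ℝ) :
    ∑ w ∈ cylinder S v, F w = ∑ c : 𝒳 u, ∑ w ∈ cylinder (insert u S) (update v u c), F w := by
  rw [← Finset.sum_fiberwise (cylinder S v) (fun w => w u)]
  refine Finset.sum_congr rfl fun c _ => Finset.sum_congr ?_ fun _ _ => rfl
  ext w
  simp only [Finset.mem_filter, mem_cylinder, Set.mem_insert_iff, forall_eq_or_imp,
    update_self]
  constructor
  · rintro ⟨hS, rfl⟩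
    exact ⟨rfl, fun i hi => by rw [update_of_ne (ne_of_mem_of_not_mem hi hu), hS i hi]⟩
  · rintro ⟨rfl, hS⟩
    exact ⟨fun i hi => by rw [hS i hi, update_of_ne (ne_of_mem_of_not_mem hi hu)], rfl⟩

theorem sum_cylinder_update {S : Set V} {u : V} (hu : u ∈ S) (v : ∀ i, 𝒳 i) (c : 𝒳 u)
    (F : (∀ i, 𝒳 i) → ℝ) :
    ∑ w ∈ cylinder S (update v u c), F w = ∑ w ∈ cylinder S v, F (update w u c) := by
  symm
  refine Finset.sum_nbij' (fun w => update w u c) (fun w => update w u (v u)) ?_ ?_ ?_ ?_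
    fun _ _ => rfl
  all_goals intro w hw; simp only [mem_cylinder] at hw ⊢
  · intro i hi
    rcases eq_or_ne i u with rfl | hiu <;> simp [update_of_ne, *]
  · intro i hi
    rcases eq_or_ne i u with rfl | hiu
    · simp
    · simpa [update_of_ne hiu] using hw i hi
  · rw [update_idem, ← hw u hu, update_eq_self]
  · rw [update_idem, ← update_self u c v, ← hw u hu, update_eq_self]

theorem sumOut_eq_sumOut_diff_singleton {U : Set V} {u : V} (hu : u ∈ U)
    (Φ : (∀ i, 𝒳 i) → ℝ) (v : ∀ i, 𝒳 i) :
    sumOut U Φ v = sumOut (U \ {u}) (fun w => ∑ c : 𝒳 u, Φ (update w u c)) v := by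
  have hcompl : insert u Uᶜ = (U \ {u})ᶜ := by
    ext i
    by_cases hi : i = u <;> simp [hi, hu]
  rw [sumOut, sum_cylinder_fiberwise (Set.notMem_compl_iff.2 hu), sumOut, Finset.sum_comm,
    hcompl]
  exact Finset.sum_congr rfl fun c _ => sum_cylinder_update (by simp) v c Φ

end Marginalization

section Conditionals

variable {V : Type} [Fintype V] [DecidableEq V] {𝒳 : V → Type} [∀ i, Fintype (𝒳 i)]
  {p : (∀ i, 𝒳 i) → ℝ}

theorem marginal_pos (hp : ∀ v, 0 < p v) (S : Set V) (v : ∀ i, 𝒳 i) : 0 < marginal p S v := by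
  rw [marginal_eq_sum_cylinder]
  exact Finset.sum_pos (fun w _ => hp w) ⟨v, mem_cylinder.2 fun _ _ => rfl⟩

theorem marginal_congr {S : Set V} {v v' : ∀ i, 𝒳 i} (h : ∀ i ∈ S, v i = v' i) :
    marginal p S v = marginal p S v' := by
  have : cylinder S v = cylinder S v' := by
    ext w
    simp only [mem_cylinder]
    exact forall₂_congr fun i hi => by rw [h i hi]
  rw [marginal_eq_sum_cylinder, marginal_eq_sum_cylinder, this]

theorem condP_congr {A S : Set V} {v v' : ∀ i, 𝒳 i} (h : ∀ i ∈ A ∪ S, v i = v' i) :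
    condP p A S v = condP p A S v' := by
  rw [condP, condP, marginal_congr h, marginal_congr fun i hi => h i (Or.inr hi)]

theorem condP_update_of_notMem {A S : Set V} {u : V} (hu : u ∉ A ∪ S) (v : ∀ i, 𝒳 i)
    (c : 𝒳 u) : condP p A S (update v u c) = condP p A S v :=
  condP_congr fun _ hi => update_of_ne (ne_of_mem_of_not_mem hi hu) c v

theorem condP_empty (hp : ∀ v, 0 < p v) (S : Set V) (v : ∀ i, 𝒳 i) : condP p ∅ S v = 1 := by
  rw [condP, Set.empty_union, div_self (marginal_pos hp S v).ne']

theorem sum_marginal_update {T : Set V} {u : V} (hu : u ∈ T) (v : ∀ i, 𝒳 i) :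
    ∑ c : 𝒳 u, marginal p T (update v u c) = marginal p (T \ {u}) v := by
  rw [marginal_eq_sum_cylinder, sum_cylinder_fiberwise (fun h => h.2 rfl),
    Set.insert_sdiff_singleton, Set.insert_eq_of_mem hu]
  exact Finset.sum_congr rfl fun c _ => marginal_eq_sum_cylinder p T _

theorem sum_condP_update {A S : Set V} {u : V} (hA : u ∈ A) (hS : u ∉ S) (v : ∀ i, 𝒳 i) :
    ∑ c : 𝒳 u, condP p A S (update v u c) = condP p (A \ {u}) S v := by
  have hden : ∀ c, marginal p S (update v u c) = marginal p S v := fun c =>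
    marginal_congr fun i hi => update_of_ne (ne_of_mem_of_not_mem hi hS) c v
  have hset : (A ∪ S) \ {u} = A \ {u} ∪ S := by
    rw [Set.union_sdiff_distrib, Set.sdiff_singleton_eq_self hS]
  simp only [condP, hden, ← Finset.sum_div]
  rw [sum_marginal_update (Set.mem_union_left S hA), hset]

theorem sum_condP_singleton_update (hp : ∀ v, 0 < p v) {S : Set V} {u : V} (hS : u ∉ S)
    (v : ∀ i, 𝒳 i) : ∑ c : 𝒳 u, condP p {u} S (update v u c) = 1 := by
  rw [sum_condP_update (Set.mem_singleton u) hS, Set.sdiff_self, condP_empty hp]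

theorem condP_eq_mul_condP (hp : ∀ v, 0 < p v) {C P : Set V} {m : V} (hm : m ∈ C)
    (v : ∀ i, 𝒳 i) :
    condP p C P v = condP p {m} (C \ {m} ∪ P) v * condP p (C \ {m}) P v := by
  have hset : {m} ∪ (C \ {m} ∪ P) = C ∪ P := by
    rw [← Set.union_assoc, Set.union_sdiff_self, Set.union_eq_self_of_subset_left
      (Set.singleton_subset_iff.2 hm)]
  have h1 := (marginal_pos hp (C \ {m} ∪ P) v).ne'
  have h2 := (marginal_pos hp P v).ne'
  rw [condP, condP, condP, hset]
  field_simp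

end Conditionals

theorem sum_prod_update {ι V : Type} [DecidableEq ι] [DecidableEq V] {𝒳 : V → Type}
    [∀ i, Fintype (𝒳 i)] {s : Finset ι} {i₀ : ι} (hi₀ : i₀ ∈ s) {u : V}
    (f : ι → (∀ i, 𝒳 i) → ℝ) (hf : ∀ i ∈ s, i ≠ i₀ → ∀ w c, f i (update w u c) = f i w)
    (w : ∀ i, 𝒳 i) :
    ∑ c : 𝒳 u, ∏ i ∈ s, f i (update w u c) =
      (∑ c : 𝒳 u, f i₀ (update w u c)) * ∏ i ∈ s.erase i₀, f i w := by
  rw [Finset.sum_mul]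
  refine Finset.sum_congr rfl fun c _ => ?_
  rw [← Finset.mul_prod_erase s _ hi₀]
  exact congrArg _ (Finset.prod_congr rfl fun i hi =>
    hf i (Finset.mem_of_mem_erase hi) (Finset.ne_of_mem_erase hi) w c)

section Relations

variable {α : Type*} {r : α → α → Prop}

theorem exists_forall_not_transGen [Finite α] (hr : ∀ a, ¬ Relation.TransGen r a a)
    {s : Set α} (hs : s.Nonempty) : ∃ m ∈ s, ∀ b ∈ s, ¬ Relation.TransGen r m b := by
  have : IsTrans α (flip (Relation.TransGen r)) := ⟨fun _ _ _ hab hbc => hbc.trans hab⟩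
  have : Std.Irrefl (flip (Relation.TransGen r)) := ⟨hr⟩
  exact (Finite.wellFounded_of_trans_of_irrefl (flip (Relation.TransGen r))).has_min s hs

theorem Relation.ReflTransGen.exists_injective_chain {a b : α} (h : Relation.ReflTransGen r a b) :
    ∃ (m : ℕ) (f : ℕ → α), f 0 = a ∧ f m = b ∧ (∀ i ≤ m, ∀ j ≤ m, f i = f j → i = j) ∧
      ∀ i < m, r (f i) (f (i + 1)) := by
  induction h using Relation.ReflTransGen.head_induction_on with
  | refl => exact ⟨0, fun _ => b, rfl, rfl, fun i hi j hj _ => by omega, fun i hi => by omega⟩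
  | @head a c hac _ ih =>
    obtain ⟨m, f, hf0, hfm, hinj, hr⟩ := ih
    by_cases hrep : ∃ k ≤ m, f k = a
    · -- `a` already occurs on the chain: keep the part after it
      obtain ⟨k, hk, hfk⟩ := hrep
      refine ⟨m - k, fun i => f (i + k), by simpa using hfk,
        show f (m - k + k) = b by rw [Nat.sub_add_cancel hk, hfm],
        fun i hi j hj hij => by have := hinj _ (by omega) _ (by omega) hij; omega,
        fun i hi => by simpa [Nat.add_right_comm] using hr (i + k) (by omega)⟩
    · push Not at hrep
      refine ⟨m + 1, fun | 0 => a | n + 1 => f n, rfl, hfm, ?_, ?_⟩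
      · rintro (_ | i) hi (_ | j) hj hij
        · rfl
        · exact absurd hij.symm (hrep j (by omega))
        · exact absurd hij (hrep i (by omega))
        · simpa using hinj i (by omega) j (by omega) hij
      · rintro (_ | i) hi
        · simpa [hf0] using hac
        · exact hr i (by omega)

end Relations

namespace PDG

variable {V : Type} {G : PDG V}

theorem StrictlyAcyclic.not_reflTransGen_sStep (hSA : G.StrictlyAcyclic) {a c : V}
    (hac : G.dir a c) : ¬ Relation.ReflTransGen G.SStep c a := by
  intro hca
  obtain ⟨m, f, hf0, hfm, -, hf⟩ := hca.exists_injective_chain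
  have hm : m ≠ 0 := by
    rintro rfl
    rw [← hf0, hfm] at hac
    exact G.dir_irrefl a hac
  refine hSA ⟨m + 1, fun | 0 => a | n + 1 => f n, by omega, hfm.symm, ?_, 0, by omega,
    by simpa [hf0] using hac⟩
  rintro (_ | i) hi
  · exact Or.inl (by simpa [hf0] using hac)
  · exact hf i (by omega)

theorem sameChain_symm {i j : V} (h : G.sameChain i j) : G.sameChain j i := by
  induction h with
  | refl => exact .refl
  | tail _ hst ih => exact .head (G.undir_symm _ _ hst) ih

theorem chainComp_eq_of_sameChain {i j : V} (h : G.sameChain i j) :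
    G.chainComp i = G.chainComp j :=
  Set.ext fun _ => ⟨(sameChain_symm h).trans, h.trans⟩

theorem mem_chainComp_self (i : V) : i ∈ G.chainComp i := Relation.ReflTransGen.refl

theorem sStep_of_sameChain {i j : V} (h : G.sameChain i j) : Relation.ReflTransGen G.SStep i j :=
  Relation.ReflTransGen.mono (fun _ _ => Or.inr) _ _ h

section Meek

variable (hSA : G.StrictlyAcyclic) (hMeek : ∀ I J K : V, G.dir I J → G.undir J K → G.Adj I K)
include hSA hMeek

theorem dir_of_dir_of_sameChain {k c i : V} (hkc : G.dir k c) (hci : G.sameChain c i) :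
    G.dir k i := by
  induction hci with
  | refl => exact hkc
  | @tail b b' _ hbb' hkb =>
    rcases hMeek k b b' hkb hbb' with h | h | h
    · exact h
    · exact absurd ((Relation.ReflTransGen.single (r := G.SStep) (Or.inl hkb)).tail
        (Or.inr hbb')) (hSA.not_reflTransGen_sStep h)
    · exact absurd ((Relation.ReflTransGen.single (r := G.SStep) (Or.inr hbb')).tail
        (Or.inr (G.undir_symm _ _ h))) (hSA.not_reflTransGen_sStep hkb)

theorem Pa_eq_Pa_chainComp {S : Set V} {i : V} (hS : S ⊆ G.chainComp i) (hne : S.Nonempty) :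
    G.Pa S = G.Pa (G.chainComp i) := by
  obtain ⟨s, hs⟩ := hne
  refine Set.Subset.antisymm (fun k ⟨d, hd, hkd⟩ => ⟨d, hS hd, hkd⟩) fun k ⟨d, hd, hkd⟩ => ?_
  exact ⟨s, hs, dir_of_dir_of_sameChain hSA hMeek hkd ((sameChain_symm hd).trans (hS hs))⟩

end Meek

theorem notMem_chainComp_of_mem_Pa (hSA : G.StrictlyAcyclic) {i k : V}
    (hk : k ∈ G.Pa (G.chainComp i)) : k ∉ G.chainComp i := fun hki => by
  obtain ⟨d, hd, hkd⟩ := hk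
  exact hSA.not_reflTransGen_sStep hkd (sStep_of_sameChain ((sameChain_symm hd).trans hki))

theorem not_transGen_mem_Pa_chainComp (hSA : G.StrictlyAcyclic) (a : V) :
    ¬ Relation.TransGen (fun x y => x ∈ G.Pa (G.chainComp y)) a a := by
  have key : ∀ {x y : V}, Relation.TransGen (fun x y => x ∈ G.Pa (G.chainComp y)) x y →
      ∃ c, G.dir x c ∧ Relation.ReflTransGen G.SStep c y := by
    intro x y h
    induction h with
    | single h =>
      obtain ⟨d, hd, hxd⟩ := h
      exact ⟨d, hxd, sStep_of_sameChain (sameChain_symm hd)⟩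
    | tail _ hstep ih =>
      obtain ⟨c, hxc, hc⟩ := ih
      obtain ⟨d, hd, hbd⟩ := hstep
      exact ⟨c, hxc, hc.trans (.head (Or.inl hbd) (sStep_of_sameChain (sameChain_symm hd)))⟩
  intro ha
  obtain ⟨c, hac, hca⟩ := key ha
  exact hSA.not_reflTransGen_sStep hac hca

@[simp]
theorem mem_Pa_singleton {i j : V} : i ∈ G.Pa {j} ↔ G.dir i j := by
  simp [Pa]

theorem subset_An (Y : Set V) : Y ⊆ G.An Y := fun y hy => ⟨y, hy, .refl⟩

theorem mem_An_of_dir {Y : Set V} {i k : V} (hi : i ∈ G.An Y) (hki : G.dir k i) : k ∈ G.An Y :=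
  let ⟨d, hd, hid⟩ := hi
  ⟨d, hd, .head hki hid⟩

theorem An_mono {H : PDG V} (h : ∀ a b, G.dir a b → H.dir a b) (Y : Set V) : G.An Y ⊆ H.An Y :=
  fun _ ⟨d, hd, hid⟩ => ⟨d, hd, Relation.ReflTransGen.mono h _ _ hid⟩

theorem An_induce_subset {S Y : Set V} (hY : Y ⊆ S) : (G.induce S).An Y ⊆ S := by
  rintro i ⟨d, hd, hid⟩
  rcases hid.cases_head with rfl | ⟨_, hstep, -⟩
  exacts [hY hd, hstep.2.1]

theorem mem_An_induce_of_dir {S Y : Set V} (hY : Y ⊆ S) {i k : V} (hi : i ∈ (G.induce S).An Y)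
    (hki : G.dir k i) (hk : k ∈ S) : k ∈ (G.induce S).An Y :=
  mem_An_of_dir hi ⟨hki, hk, An_induce_subset hY hi⟩

theorem InClass.An_induce_subset_An_induce {D : PDG V} (hcl : D.InClass G) (S Y : Set V) :
    (G.induce S).An Y ⊆ (D.induce S).An Y :=
  An_mono (G := G.induce S) (H := D.induce S) (fun a b h => ⟨hcl.2.2.1 a b h.1, h.2⟩) Y

theorem InClass.sStep_of_dir {D : PDG V} (hcl : D.InClass G) {a b : V} (h : D.dir a b) :
    G.SStep a b := by
  rcases (hcl.2.1 a b).1 (Or.inl h) with h' | h' | h'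
  exacts [Or.inl h', absurd h (D.not_dir_dir b a (hcl.2.2.1 b a h')), Or.inr h']

theorem hasProperUndirStartPath_of_reflTransGen {X Y : Set V} {x u y : V} (hx : x ∈ X)
    (hxu : G.undir x u) (hu : u ∉ X) (hy : y ∈ Y)
    (h : Relation.ReflTransGen (fun a b => G.SStep a b ∧ b ∉ X) u y) :
    G.HasProperUndirStartPath X Y := by
  obtain ⟨m, f, hf0, hfm, hinj, hf⟩ := h.exists_injective_chain
  have hfX : ∀ i ≤ m, f i ∉ X := by
    rintro (_ | i) hi
    exacts [hf0 ▸ hu, (hf i (by omega)).2]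
  refine ⟨m + 1, fun | 0 => x | n + 1 => f n, by omega, ?_, hx, show f m ∈ Y from hfm ▸ hy,
    ?_, ?_, by simpa [hf0] using hxu⟩
  · rintro (_ | i) hi (_ | j) hj hij
    · rfl
    · exact absurd ((show x = f j from hij) ▸ hx) (hfX j (by omega))
    · exact absurd ((show f i = x from hij) ▸ hx) (hfX i (by omega))
    · simpa using hinj i (by omega) j (by omega) hij
  · rintro (_ | i) hi
    · exact Or.inr (by simpa [hf0] using hxu)
    · exact (hf i (by omega)).1
  · rintro (_ | i) hi1 hi
    exacts [absurd hi1 (by omega), hfX i (by omega)]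

theorem InClass.mem_An_induce_of_undir {D : PDG V} (hcl : D.InClass G) {X Y : Set V}
    (hpath : ¬ G.HasProperUndirStartPath X Y) (hYX : Y ⊆ Xᶜ) {i k : V}
    (hi : i ∈ (D.induce Xᶜ).An Y) (hki : D.dir k i) (hund : G.undir k i) :
    k ∈ (D.induce Xᶜ).An Y := by
  by_cases hkX : k ∈ X
  · obtain ⟨y, hy, hiy⟩ := hi
    refine absurd (hasProperUndirStartPath_of_reflTransGen hkX hund
      (An_induce_subset hYX ⟨y, hy, hiy⟩) hy ?_) hpath
    exact Relation.ReflTransGen.mono (fun a b h => ⟨hcl.sStep_of_dir h.1, h.2.2⟩) _ _ hiy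
  · exact mem_An_induce_of_dir hYX hi hki hkX

end PDG

section Factorization

variable {V : Type} [Fintype V] [DecidableEq V] {𝒳 : V → Type} [∀ i, Fintype (𝒳 i)]
  {p : (∀ i, 𝒳 i) → ℝ} {D : PDG V}

theorem condP_Pa_update {u j : V} (huj : u ≠ j) (hu : ¬ D.dir u j) (w : ∀ i, 𝒳 i) (c : 𝒳 u) :
    condP p {j} (D.Pa {j}) (update w u c) = condP p {j} (D.Pa {j}) w :=
  condP_update_of_notMem (by simp [huj, hu]) w c

theorem sumOut_prod_condP_sdiff (hp : ∀ v, 0 < p v) (hD : D.IsDAG) {U : Set V}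
    {F W : Finset V} (hWF : W ⊆ F) (hWU : ↑W ⊆ U)
    (hchild : ∀ u ∈ W, ∀ j ∈ F, D.dir u j → j ∈ W) (v : ∀ i, 𝒳 i) :
    sumOut U (fun w => ∏ j ∈ F, condP p {j} (D.Pa {j}) w) v =
      sumOut (U \ W) (fun w => ∏ j ∈ F \ W, condP p {j} (D.Pa {j}) w) v := by
  induction W using Finset.strongInduction generalizing U F with
  | _ W ih =>
  rcases W.eq_empty_or_nonempty with rfl | hne
  · simp
  obtain ⟨u, huW, hu⟩ := exists_forall_not_transGen hD.2 (s := ↑W) hne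
  have hnochild : ∀ j ∈ F, ¬ D.dir u j := fun j hj h =>
    hu j (hchild u huW j hj h) (.single h)
  have hsum : ∀ w : ∀ i, 𝒳 i, ∑ c : 𝒳 u, ∏ j ∈ F, condP p {j} (D.Pa {j}) (update w u c) =
      ∏ j ∈ F.erase u, condP p {j} (D.Pa {j}) w := fun w => by
    rw [sum_prod_update (hWF huW) _
      (fun j hj hju => condP_Pa_update (Ne.symm hju) (hnochild j hj)),
      sum_condP_singleton_update hp (by simpa using D.dir_irrefl u) w, one_mul]
  have hU : (U \ {u}) \ ↑(W.erase u) = U \ ↑W := by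
    rw [Finset.coe_erase, Set.sdiff_sdiff, Set.union_sdiff_cancel (by simpa using huW)]
  have hF : F.erase u \ W.erase u = F \ W := by
    ext x; by_cases hx : x = u <;> simp [hx, Finset.mem_coe.1 huW]
  rw [sumOut_eq_sumOut_diff_singleton (hWU huW), sumOut_congr fun w _ => hsum w,
    ih (W.erase u) (Finset.erase_ssubset huW) (Finset.erase_subset_erase u hWF)
      (by rw [Finset.coe_erase]; exact Set.sdiff_subset_sdiff_left hWU)
      (fun u' hu' j hj h => Finset.mem_erase.2 ⟨(Finset.mem_erase.1 hj).1,
        hchild u' (Finset.mem_of_mem_erase hu') j (Finset.mem_of_mem_erase hj) h⟩),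
    hU, hF]

theorem marginal_eq_sumOut_prod_condP (hp : ∀ v, 0 < p v) (hD : D.IsDAG)
    (hfa : FactorizesDAG p D) {T R : Set V} (hT : ∀ i ∈ T, ∀ k, D.dir k i → k ∈ T)
    (hRT : R ⊆ T) (v : ∀ i, 𝒳 i) :
    marginal p R v =
      sumOut (T \ R) (fun w => ∏ j ∈ Finset.univ.filter (· ∈ T), condP p {j} (D.Pa {j}) w) v := by
  have hbarren := sumOut_prod_condP_sdiff hp hD (U := Rᶜ) (Finset.subset_univ _)
    (W := Finset.univ.filter (· ∉ T)) (fun x hx hxR => by simp_all [hRT hxR])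
    (fun u hu j _ huj => by simpa using fun hj => (Finset.mem_filter.1 hu).2 (hT j hj u huj)) v
  have hU : Rᶜ \ ↑(Finset.univ.filter (· ∉ T)) = T \ R := by
    ext x; simp [and_comm]
  have hF : Finset.univ \ Finset.univ.filter (· ∉ T) = Finset.univ.filter (· ∈ T) := by
    ext x; simp
  rw [marginal_eq_sum_cylinder, ← compl_compl R, ← sumOut, sumOut_congr fun w _ => hfa w,
    compl_compl, hbarren, hU, hF]

theorem condP_singleton_eq_condP_Pa (hp : ∀ v, 0 < p v) (hD : D.IsDAG)
    (hfa : FactorizesDAG p D) {u : V} {S : Set V} (hPa : D.Pa {u} ⊆ S) (huS : u ∉ S)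
    (hnd : ∀ s ∈ S, ¬ Relation.TransGen D.dir u s) (v : ∀ i, 𝒳 i) :
    condP p {u} S v = condP p {u} (D.Pa {u}) v := by
  set T := D.An ({u} ∪ S)
  have hT : ∀ i ∈ T, ∀ k, D.dir k i → k ∈ T := fun i hi k hk => D.mem_An_of_dir hi hk
  have huT : u ∈ T := D.subset_An _ (Or.inl rfl)
  have hnochild : ∀ i ∈ T, ¬ D.dir u i := by
    rintro i ⟨d, hd | hd, hid⟩ hui
    · exact hD.2 u (Relation.TransGen.head' hui (hd ▸ hid))
    · exact hnd d hd (Relation.TransGen.head' hui hid)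
  have hT' : ∀ i ∈ T \ {u}, ∀ k, D.dir k i → k ∈ T \ {u} := fun i hi k hk =>
    ⟨hT i hi.1 k hk, by rintro rfl; exact hnochild i hi.1 hk⟩
  have hST' : S ⊆ T \ {u} := fun s hs =>
    ⟨D.subset_An _ (Or.inr hs), by rintro rfl; exact huS hs⟩
  have hdiff : (T \ {u}) \ S = T \ ({u} ∪ S) := by rw [Set.sdiff_sdiff]
  have hconst : ∀ w : ∀ i, 𝒳 i, (∀ i, i ∉ T \ ({u} ∪ S) → w i = v i) →
      condP p {u} (D.Pa {u}) w = condP p {u} (D.Pa {u}) v := fun w hw =>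
    condP_congr fun i hi => hw i fun h => h.2 (Set.union_subset_union_right _ hPa hi)
  have hnum : marginal p ({u} ∪ S) v = condP p {u} (D.Pa {u}) v * marginal p S v := by
    rw [marginal_eq_sumOut_prod_condP hp hD hfa hT (D.subset_An _) v,
      marginal_eq_sumOut_prod_condP hp hD hfa hT' hST' v, hdiff, ← sumOut_mul_left hconst]
    refine sumOut_congr fun w _ => ?_
    rw [← Finset.mul_prod_erase _ _ (by simpa using huT)]
    exact congrArg _ (Finset.prod_congr (by ext; simp [and_comm]) fun _ _ => rfl)
  rw [condP, hnum, mul_div_assoc, div_self (marginal_pos hp S v).ne', mul_one]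

theorem prod_condP_eq_condP (hp : ∀ v, 0 < p v) (hD : D.IsDAG) (hfa : FactorizesDAG p D)
    {P : Set V} (C : Finset V) (hPC : ∀ k ∈ P, ∀ i ∈ C, D.dir k i)
    (hC : ∀ i ∈ C, D.Pa {i} ⊆ P ∪ ↑C) (v : ∀ i, 𝒳 i) :
    ∏ i ∈ C, condP p {i} (D.Pa {i}) v = condP p ↑C P v := by
  induction C using Finset.strongInduction with
  | _ C ih =>
  rcases C.eq_empty_or_nonempty with rfl | hne
  · simp [condP_empty hp]
  obtain ⟨m, hmC, hm⟩ := exists_forall_not_transGen hD.2 (s := ↑C) hne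
  have hmarkov : condP p {m} (↑C \ {m} ∪ P) v = condP p {m} (D.Pa {m}) v := by
    refine condP_singleton_eq_condP_Pa hp hD hfa (fun k hk => ?_) ?_ ?_ v
    · rcases hC m hmC hk with hkP | hkC
      · exact Or.inr hkP
      · exact Or.inl ⟨hkC, by rintro rfl; exact D.dir_irrefl k (by simpa using hk)⟩
    · rintro (⟨-, hmm⟩ | hmP)
      exacts [hmm rfl, D.dir_irrefl m (hPC m hmP m hmC)]
    · rintro s (⟨hsC, -⟩ | hsP) hms
      exacts [hm s hsC hms, hD.2 m (hms.tail (hPC s hsP m hmC))]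
  have hC' : ∀ i ∈ C.erase m, D.Pa {i} ⊆ P ∪ ↑(C.erase m) := by
    intro i hi k hk
    rcases hC i (Finset.mem_of_mem_erase hi) hk with hkP | hkC
    · exact Or.inl hkP
    · refine Or.inr (Finset.mem_erase.2 ⟨?_, hkC⟩)
      rintro rfl
      exact hm i (Finset.mem_of_mem_erase hi) (.single (by simpa using hk))
  rw [← Finset.mul_prod_erase C _ hmC, ih (C.erase m) (Finset.erase_ssubset hmC)
      (fun k hk i hi => hPC k hk i (Finset.mem_of_mem_erase hi)) hC',
    condP_eq_mul_condP hp (Finset.mem_coe.2 hmC), hmarkov, Finset.coe_erase]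

end Factorization

section ChainComponents

variable {V : Type} [Fintype V] [DecidableEq V] {𝒳 : V → Type} [∀ i, Fintype (𝒳 i)]
  {p : (∀ i, 𝒳 i) → ℝ} {G : PDG V}

omit [DecidableEq V] in
theorem mem_chainComponents {τ : Set V} : τ ∈ chainComponents G ↔ ∃ i, τ = G.chainComp i := by
  simp [chainComponents, eq_comm]

variable (hSA : G.StrictlyAcyclic) (hMeek : ∀ I J K : V, G.dir I J → G.undir J K → G.Adj I K)
include hSA hMeek

theorem cdProd_eq_prod_Pa_chainComp (hp : ∀ v, 0 < p v) (S : Set V) (v : ∀ i, 𝒳 i) :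
    cdProd G p S v = ∏ τ ∈ chainComponents G, condP p (S ∩ τ) (G.Pa τ) v := by
  refine Finset.prod_congr rfl fun τ hτ => ?_
  obtain ⟨i, rfl⟩ := mem_chainComponents.1 hτ
  rcases (S ∩ G.chainComp i).eq_empty_or_nonempty with hemp | hne
  · rw [hemp, condP_empty hp, condP_empty hp]
  · rw [PDG.Pa_eq_Pa_chainComp hSA hMeek Set.inter_subset_right hne]

theorem prod_condP_eq_prod_chainComponents {D : PDG V} (hcl : D.InClass G)
    (hp : ∀ v, 0 < p v) (hfa : FactorizesDAG p D) {S : Set V}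
    (hS : ∀ i ∈ S, ∀ k, D.dir k i → G.undir k i → k ∈ S) (v : ∀ i, 𝒳 i) :
    ∏ j ∈ Finset.univ.filter (· ∈ S), condP p {j} (D.Pa {j}) v =
      ∏ τ ∈ chainComponents G, condP p (S ∩ τ) (G.Pa τ) v := by
  rw [← Finset.prod_fiberwise_of_maps_to (g := G.chainComp)
    (fun x _ => mem_chainComponents.2 ⟨x, rfl⟩)]
  refine Finset.prod_congr rfl fun τ hτ => ?_
  obtain ⟨i₀, rfl⟩ := mem_chainComponents.1 hτ
  set C := (Finset.univ.filter (· ∈ S)).filter fun x => G.chainComp x = G.chainComp i₀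
  have hC : (↑C : Set V) = S ∩ G.chainComp i₀ := by
    ext x
    simp only [C, Finset.coe_filter, Finset.mem_filter, Finset.mem_univ, true_and,
      Set.mem_ofPred_eq, Set.mem_inter_iff]
    exact and_congr_right fun _ => ⟨fun h => h ▸ PDG.mem_chainComp_self x,
      fun h => (PDG.chainComp_eq_of_sameChain h).symm⟩
  have hPC : ∀ k ∈ G.Pa (G.chainComp i₀), ∀ i ∈ C, D.dir k i := by
    rintro k ⟨d, hd, hkd⟩ i hi
    have hi' : i ∈ S ∩ G.chainComp i₀ := hC ▸ Finset.mem_coe.2 hi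
    exact hcl.2.2.1 k i (PDG.dir_of_dir_of_sameChain hSA hMeek hkd
      ((PDG.sameChain_symm hd).trans hi'.2))
  have hCPa : ∀ i ∈ C, D.Pa {i} ⊆ G.Pa (G.chainComp i₀) ∪ ↑C := by
    intro i hi k hk
    have hi' : i ∈ S ∩ G.chainComp i₀ := hC ▸ Finset.mem_coe.2 hi
    rw [PDG.mem_Pa_singleton] at hk
    rw [hC]
    rcases (hcl.2.1 k i).1 (Or.inl hk) with h | h | h
    · exact Or.inl ⟨i, hi'.2, h⟩
    · exact absurd (hcl.2.2.1 i k h) (D.not_dir_dir k i hk)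
    · exact Or.inr ⟨hS i hi'.1 k hk h, hi'.2.tail (G.undir_symm k i h)⟩
  rw [prod_condP_eq_condP hp hcl.1 hfa C hPC hCPa v, hC]

theorem sumOut_prod_condP_chainComponents (hp : ∀ v, 0 < p v) {A B : Set V} (R : Finset V)
    (hRA : ∀ u ∈ R, u ∉ A) (hRB : ∀ u ∈ R, u ∉ B) (hRPa : ∀ u ∈ R, ∀ a ∈ A, ¬ G.dir u a)
    (v : ∀ i, 𝒳 i) :
    sumOut (B ∪ ↑R) (fun w => ∏ τ ∈ chainComponents G, condP p ((A ∪ ↑R) ∩ τ) (G.Pa τ) w) v =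
      sumOut B (fun w => ∏ τ ∈ chainComponents G, condP p (A ∩ τ) (G.Pa τ) w) v := by
  induction R using Finset.strongInduction with
  | _ R ih =>
  rcases R.eq_empty_or_nonempty with rfl | hne
  · simp
  obtain ⟨u, huR, hu⟩ :=
    exists_forall_not_transGen (PDG.not_transGen_mem_Pa_chainComp hSA) (s := ↑R) hne
  have huR' : u ∈ R := huR
  have hτu : G.chainComp u ∈ chainComponents G := mem_chainComponents.2 ⟨u, rfl⟩
  have hhead : ∀ τ : Set V, ((A ∪ ↑R) ∩ τ) \ {u} = (A ∪ ↑(R.erase u)) ∩ τ := fun τ => by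
    ext x; by_cases hx : x = u <;> simp [hx, hRA u huR', or_and_right]
  have hnotMem : ∀ τ ∈ chainComponents G, τ ≠ G.chainComp u → u ∉ τ := by
    rintro τ hτ hne' huτ
    obtain ⟨j, rfl⟩ := mem_chainComponents.1 hτ
    exact hne' (PDG.chainComp_eq_of_sameChain huτ)
  have hfree : ∀ τ ∈ chainComponents G, τ ≠ G.chainComp u → ∀ (w : ∀ i, 𝒳 i) (c : 𝒳 u),
      condP p ((A ∪ ↑R) ∩ τ) (G.Pa τ) (update w u c) = condP p ((A ∪ ↑R) ∩ τ) (G.Pa τ) w := by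
    intro τ hτ hne' w c
    rcases ((A ∪ ↑R) ∩ τ).eq_empty_or_nonempty with hemp | ⟨x, hxAR, hxτ⟩
    · rw [hemp, condP_empty hp, condP_empty hp]
    refine condP_update_of_notMem (fun h => h.elim (fun h => hnotMem τ hτ hne' h.2) ?_) w c
    obtain ⟨j, rfl⟩ := mem_chainComponents.1 hτ
    rintro ⟨d, hd, hud⟩
    rcases hxAR with hxA | hxR
    · exact hRPa u huR' x hxA (PDG.dir_of_dir_of_sameChain hSA hMeek hud
        ((PDG.sameChain_symm hd).trans hxτ))
    · refine hu x hxR (.single ?_)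
      rw [← PDG.chainComp_eq_of_sameChain hxτ]
      exact ⟨d, hd, hud⟩
  have hsum : ∀ w : ∀ i, 𝒳 i,
      ∑ c : 𝒳 u, ∏ τ ∈ chainComponents G, condP p ((A ∪ ↑R) ∩ τ) (G.Pa τ) (update w u c) =
        ∏ τ ∈ chainComponents G, condP p ((A ∪ ↑(R.erase u)) ∩ τ) (G.Pa τ) w := by
    intro w
    rw [sum_prod_update hτu _ hfree, sum_condP_update
      (show u ∈ (A ∪ ↑R) ∩ G.chainComp u from ⟨Or.inr huR, PDG.mem_chainComp_self u⟩)
      (PDG.notMem_chainComp_of_mem_Pa hSA · (PDG.mem_chainComp_self u)), hhead,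
      ← Finset.mul_prod_erase _ _ hτu]
    refine congrArg _ (Finset.prod_congr rfl fun τ hτ => ?_)
    rw [← hhead, Set.sdiff_singleton_eq_self fun h =>
      hnotMem τ (Finset.mem_of_mem_erase hτ) (Finset.ne_of_mem_erase hτ) h.2]
  have hU : (B ∪ ↑R) \ {u} = B ∪ ↑(R.erase u) := by
    ext x; by_cases hx : x = u <;> simp [hx, hRB u huR']
  rw [sumOut_eq_sumOut_diff_singleton (Set.mem_union_right B huR),
    sumOut_congr fun w _ => hsum w, hU,
    ih (R.erase u) (Finset.erase_ssubset huR')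
      (fun x hx => hRA x (Finset.mem_of_mem_erase hx))
      (fun x hx => hRB x (Finset.mem_of_mem_erase hx))
      (fun x hx => hRPa x (Finset.mem_of_mem_erase hx))]

theorem sumOut_prod_condP_chainComponents_of_subset (hp : ∀ v, 0 < p v) {A A' Y : Set V}
    (hYA : Y ⊆ A) (hAA' : A ⊆ A') (hPa : ∀ u ∈ A' \ A, ∀ a ∈ A, ¬ G.dir u a) (v : ∀ i, 𝒳 i) :
    sumOut (A' \ Y) (fun w => ∏ τ ∈ chainComponents G, condP p (A' ∩ τ) (G.Pa τ) w) v =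
      sumOut (A \ Y) (fun w => ∏ τ ∈ chainComponents G, condP p (A ∩ τ) (G.Pa τ) w) v := by
  set R := Finset.univ.filter (· ∈ A' \ A)
  have hR : (↑R : Set V) = A' \ A := by ext; simp [R]
  have hA' : A' = A ∪ ↑R := by rw [hR, Set.union_sdiff_cancel hAA']
  have hA'Y : A' \ Y = (A \ Y) ∪ ↑R := by
    rw [hR]; ext i
    have := @hAA' i; have := @hYA i
    simp only [Set.mem_sdiff, Set.mem_union]
    tauto
  rw [hA'Y, hA']
  exact sumOut_prod_condP_chainComponents hSA hMeek hp R (fun u hu => (hR ▸ hu : u ∈ A' \ A).2)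
    (fun u hu h => (hR ▸ hu : u ∈ A' \ A).2 h.1) (fun u hu => hPa u (hR ▸ hu)) v

theorem gFormula_eq_sumOut (hp : ∀ v, 0 < p v) (X Y : Set V) (v : ∀ i, 𝒳 i) :
    gFormula G p X Y v = sumOut ((G.induce Xᶜ).An Y \ Y)
      (fun w => ∏ τ ∈ chainComponents G, condP p ((G.induce Xᶜ).An Y ∩ τ) (G.Pa τ) w) v := by
  rw [gFormula, sum_ite_eq_sumOut _ fun _ => Iff.rfl]
  exact sumOut_congr fun w _ => cdProd_eq_prod_Pa_chainComp hSA hMeek hp _ w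

end ChainComponents

theorem truncMarg_eq_sumOut_prod_condP {V : Type} [Fintype V] [DecidableEq V] {𝒳 : V → Type}
    [∀ i, Fintype (𝒳 i)] {p : (∀ i, 𝒳 i) → ℝ} {D : PDG V} (hp : ∀ v, 0 < p v)
    (hD : D.IsDAG) {X Y A : Set V} (hYA : Y ⊆ A) (hAX : A ⊆ Xᶜ)
    (hA : ∀ i ∈ A, ∀ k, D.dir k i → k ∉ X → k ∈ A) (v : ∀ i, 𝒳 i) :
    truncMarg D p X Y v =
      sumOut (A \ Y) (fun w => ∏ j ∈ Finset.univ.filter (· ∈ A), condP p {j} (D.Pa {j}) w) v := by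
  set F := Finset.univ.filter (· ∉ X)
  set W := Finset.univ.filter fun i => i ∉ X ∧ i ∉ A
  have hWF : W ⊆ F := fun i hi => by
    simp only [W, F, Finset.mem_filter] at hi ⊢
    exact ⟨hi.1, hi.2.1⟩
  have hWU : ↑W ⊆ (X ∪ Y)ᶜ := fun i hi => by
    simp only [W, Finset.coe_filter, Finset.mem_univ, true_and, Set.mem_ofPred_eq] at hi
    simp only [Set.mem_compl_iff, Set.mem_union, not_or]
    exact ⟨hi.1, fun h => hi.2 (hYA h)⟩
  have hchild : ∀ u ∈ W, ∀ j ∈ F, D.dir u j → j ∈ W := fun u hu j hj huj => by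
    simp only [W, F, Finset.mem_filter, Finset.mem_univ, true_and] at hu hj ⊢
    exact ⟨hj, fun h => hu.2 (hA j h u huj hu.1)⟩
  have hU : (X ∪ Y)ᶜ \ ↑W = A \ Y := by
    ext i
    simp only [W, Finset.coe_filter, Finset.mem_univ, true_and, Set.mem_sdiff,
      Set.mem_compl_iff, Set.mem_union, Set.mem_ofPred_eq]
    have := @hAX i
    tauto
  have htrunc : truncMarg D p X Y v =
      sumOut (X ∪ Y)ᶜ (fun w => ∏ j ∈ F, condP p {j} (D.Pa {j}) w) v := by
    rw [truncMarg]
    exact sum_ite_eq_sumOut _ (fun w => ⟨fun h i hi => h i (Set.notMem_compl_iff.1 hi),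
      fun h i hi => h i (Set.notMem_compl_iff.2 hi)⟩) _
  rw [htrunc, sumOut_prod_condP_sdiff hp hD hWF hWU hchild, hU]
  refine sumOut_congr fun w _ => Finset.prod_congr ?_ fun _ _ => rfl
  ext i
  have := @hAX i
  simp only [W, F, Finset.mem_sdiff, Finset.mem_filter, Finset.mem_univ, true_and]
  tauto

theorem stmt12_general {V : Type} [Fintype V] [DecidableEq V] (G : PDG V)
    (hSA : G.StrictlyAcyclic)
    (hMeek : ∀ I J K : V, G.dir I J → G.undir J K → G.Adj I K)
    (X Y : Set V) (hXY : Disjoint X Y)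
    (hpath : ¬ G.HasProperUndirStartPath X Y)
    (𝒳 : V → Type) [∀ i, Fintype (𝒳 i)]
    (p : (∀ i, 𝒳 i) → ℝ) (hp : IsPositivePMF p)
    (hfact : ∀ D : PDG V, D.InClass G → FactorizesDAG p D) :
    ∀ D : PDG V, D.InClass G →
      ∀ v : ∀ i, 𝒳 i, truncMarg D p X Y v = gFormula G p X Y v := by
  intro D hcl v
  set A := (G.induce Xᶜ).An Y
  set A' := (D.induce Xᶜ).An Y
  have hYX : Y ⊆ Xᶜ := fun y hy hyX => Set.disjoint_left.1 hXY hyX hy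
  have hA'X : A' ⊆ Xᶜ := PDG.An_induce_subset hYX
  calc truncMarg D p X Y v
      = sumOut (A' \ Y) (fun w => ∏ τ ∈ chainComponents G, condP p (A' ∩ τ) (G.Pa τ) w) v := by
        rw [truncMarg_eq_sumOut_prod_condP hp.1 hcl.1 (PDG.subset_An Y) hA'X
          fun i hi k hki hk => PDG.mem_An_induce_of_dir hYX hi hki hk]
        exact sumOut_congr fun w _ => prod_condP_eq_prod_chainComponents hSA hMeek hcl hp.1
          (hfact D hcl) (fun i hi k => hcl.mem_An_induce_of_undir hpath hYX hi) w
    _ = sumOut (A \ Y) (fun w => ∏ τ ∈ chainComponents G, condP p (A ∩ τ) (G.Pa τ) w) v :=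
        sumOut_prod_condP_chainComponents_of_subset hSA hMeek hp.1 (PDG.subset_An Y)
          (hcl.An_induce_subset_An_induce Xᶜ Y)
          (fun u hu a ha hua => hu.2 (PDG.mem_An_induce_of_dir hYX ha hua (hA'X hu.1))) v
    _ = gFormula G p X Y v := (gFormula_eq_sumOut hSA hMeek hp.1 X Y v).symm

/-- identifiability for SA-MPDAG-like graphs (Perković's theorem,
identifiability direction, discrete positive case). If there is no proper semi-directed
path from `X` to `Y` starting with an undirected edge, and `p` factorizes according to
every DAG in `[G] ≠ ∅`, then the `Y`-marginal of the truncated factorization is the same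
for every `D ∈ [G]` and equals the identification formula `Σ_b ∏_j p(b_j | pa_G(B_j))`. -/
theorem stmt12 {V : Type} [Fintype V] [DecidableEq V] (G : PDG V)
    (hSA : G.StrictlyAcyclic)
    (hMeek : ∀ I J K : V, G.dir I J → G.undir J K → G.Adj I K)
    (X Y : Set V) (hXY : Disjoint X Y)
    (hpath : ¬ G.HasProperUndirStartPath X Y)
    (𝒳 : V → Type) [∀ i, Fintype (𝒳 i)] [∀ i, Nonempty (𝒳 i)]
    (p : (∀ i, 𝒳 i) → ℝ) (hp : IsPositivePMF p)
    (hfact : ∀ D : PDG V, D.InClass G → FactorizesDAG p D)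
    (hne : ∃ D : PDG V, D.InClass G) :
    ∀ D : PDG V, D.InClass G →
      ∀ v : ∀ i, 𝒳 i, truncMarg D p X Y v = gFormula G p X Y v :=
  stmt12_general G hSA hMeek X Y hXY hpath 𝒳 p hp hfact
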